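/- Let y_1, …, y_n be i.i.d. Gamma(α, 1) random variables, x_i = y_i / Σ_j y_j. For δ_1, δ_2 ∈ (0,1) with δ_2 > e^{−2α}, with probability at least 1 − δ_1 − δ_2, min_i x_i ≥ (1/n)·(α − √(2α log(n/δ_1))) / (α + √(2α log(1/δ_2)/n)). -/

import Mathlib

open MeasureTheory ProbabilityTheory
open scoped ENNReal NNReal

/-!
The event `yᵢ S < (α - t) ∑ⱼ yⱼ` is the positivity of a linear combination of independent Gamma
variables, so a Chernoff bound with the Gamma moment generating function `(1 - s)^(-α)` controls
it. Tilting so that the factor of `yᵢ` is `(1 - t/α)^α ≤ exp (-t - t²/(2α))`, the other factors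
contribute at most `exp t` as soon as `S > nα`, so each such event has probability at most
`exp (-t²/(2α))`. Outside these `n` events, and the null event that some `yⱼ ≤ 0`, every share
`xᵢ` is at least `(α - t)/S`. Take `t = √(2α log (n/δ₁))` and `S = n (α + √(2α log (1/δ₂)/n))`.
-/

open Real Set

theorem Real.log_one_sub_le_neg_sub_sq_div_two {x : ℝ} (hx₀ : 0 ≤ x) (hx₁ : x < 1) :
    log (1 - x) ≤ -x - x ^ 2 / 2 := by
  have h := sum_le_hasSum (Finset.range 2) (fun i _ => by positivity)
    (hasSum_pow_div_log_of_abs_lt_one (abs_lt.2 ⟨by linarith, hx₁⟩))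
  norm_num [Finset.sum_range_succ] at h
  linarith

theorem Real.one_sub_rpow_le_exp {x a : ℝ} (hx₀ : 0 ≤ x) (hx₁ : x < 1) (ha : 0 ≤ a) :
    (1 - x) ^ a ≤ exp (-(a * (x + x ^ 2 / 2))) := by
  rw [rpow_def_of_pos (by linarith), exp_le_exp]
  nlinarith [log_one_sub_le_neg_sub_sq_div_two hx₀ hx₁]

theorem Real.one_add_rpow_le_exp {x a : ℝ} (hx : 0 ≤ x) (ha : 0 ≤ a) :
    (1 + x) ^ a ≤ exp (a * x) := by
  rw [rpow_def_of_pos (by linarith), exp_le_exp]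
  nlinarith [log_le_sub_one_of_pos (by linarith : 0 < 1 + x)]

theorem measurable_gammaPDF (a r : ℝ) : Measurable (gammaPDF a r) :=
  (measurable_gammaPDFReal a r).ennreal_ofReal

theorem gammaMeasure_Iic_zero {a r : ℝ} : gammaMeasure a r (Iic 0) = 0 := by
  rw [gammaMeasure, withDensity_apply _ measurableSet_Iic, ← setLIntegral_congr Iio_ae_eq_Iic,
    lintegral_gammaPDF_of_nonpos le_rfl]

theorem ae_pos_gammaMeasure {a r : ℝ} : ∀ᵐ x ∂gammaMeasure a r, 0 < x :=
  ae_iff.2 (by simp only [not_lt]; exact gammaMeasure_Iic_zero)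

theorem lintegral_exp_mul_gammaMeasure {a r s : ℝ} (ha : 0 < a) (hr : 0 < r) (hs : s < r) :
    ∫⁻ x, ENNReal.ofReal (exp (s * x)) ∂gammaMeasure a r =
      ENNReal.ofReal ((r / (r - s)) ^ a) := by
  have hrs : 0 < r - s := sub_pos.2 hs
  have tilt : ∀ x, gammaPDF a r x * ENNReal.ofReal (exp (s * x)) =
      ENNReal.ofReal ((r / (r - s)) ^ a) * gammaPDF a (r - s) x := by
    intro x
    rw [gammaPDF, gammaPDF, ← ENNReal.ofReal_mul (gammaPDFReal_nonneg ha hr x),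
      ← ENNReal.ofReal_mul (by positivity)]
    congr 1
    unfold gammaPDFReal
    split_ifs
    · rw [div_rpow hr.le hrs.le, show -((r - s) * x) = s * x + -(r * x) by ring, exp_add]
      field_simp [(rpow_pos_of_pos hrs a).ne']
    · simp
  rw [gammaMeasure, lintegral_withDensity_eq_lintegral_mul _ (measurable_gammaPDF a r)
    (by fun_prop)]
  simp only [Pi.mul_apply, tilt]
  rw [lintegral_const_mul _ (measurable_gammaPDF a _),
    lintegral_gammaPDF_eq_one ha hrs, mul_one]

theorem integrable_exp_mul_gammaMeasure {a r s : ℝ} (ha : 0 < a) (hr : 0 < r) (hs : s < r) :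
    Integrable (fun x => exp (s * x)) (gammaMeasure a r) :=
  ⟨by fun_prop, (hasFiniteIntegral_iff_ofReal (ae_of_all _ fun _ => (exp_pos _).le)).2
    (by rw [lintegral_exp_mul_gammaMeasure ha hr hs]; exact ENNReal.ofReal_lt_top)⟩

theorem mgf_id_gammaMeasure {a r s : ℝ} (ha : 0 < a) (hr : 0 < r) (hs : s < r) :
    mgf id (gammaMeasure a r) s = (r / (r - s)) ^ a := by
  rw [mgf, integral_eq_lintegral_of_nonneg_ae (ae_of_all _ fun _ => (exp_pos _).le)
    (by fun_prop)]
  simp only [id]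
  rw [lintegral_exp_mul_gammaMeasure ha hr hs,
    ENNReal.toReal_ofReal (rpow_nonneg (div_pos hr (sub_pos.2 hs)).le _)]

theorem Real.one_sub_div_rpow_mul_one_add_div_rpow_pow_le {α t c : ℝ} (m : ℕ) (hα : 0 < α)
    (ht : 0 ≤ t) (htα : t < α) (hc : m * α ≤ c) :
    (1 - t / α) ^ α * ((1 + t / c) ^ α) ^ m ≤ exp (-(t ^ 2 / (2 * α))) := by
  have hc₀ : 0 ≤ c := le_trans (by positivity) hc
  have hfirst : (1 - t / α) ^ α ≤ exp (-t - t ^ 2 / (2 * α)) := by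
    convert one_sub_rpow_le_exp (div_nonneg ht hα.le) ((div_lt_one hα).2 htα) hα.le using 2
    field_simp
    ring
  have hrest : ((1 + t / c) ^ α) ^ m ≤ exp t :=
    calc ((1 + t / c) ^ α) ^ m ≤ exp (α * (t / c)) ^ m :=
          pow_le_pow_left₀ (by positivity) (one_add_rpow_le_exp (by positivity) hα.le) m
      _ = exp (m * α * t / c) := by rw [← exp_nat_mul]; ring_nf
      _ ≤ exp t := exp_le_exp.2 (div_le_of_le_mul₀ hc₀ ht (by nlinarith))
  calc (1 - t / α) ^ α * ((1 + t / c) ^ α) ^ m ≤ exp (-t - t ^ 2 / (2 * α)) * exp t :=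
        mul_le_mul hfirst hrest (by positivity) (exp_pos _).le
    _ = exp (-(t ^ 2 / (2 * α))) := by rw [← exp_add]; ring_nf

section
variable {Ω ι : Type*} [MeasurableSpace Ω] {μ : Measure Ω} [Fintype ι] {y : ι → Ω → ℝ} {α : ℝ}

theorem ae_forall_pos_of_map_eq_gammaMeasure {r : ℝ} (hy : ∀ j, Measurable (y j))
    (hlaw : ∀ j, μ.map (y j) = gammaMeasure α r) : ∀ᵐ ω ∂μ, ∀ j, 0 < y j ω :=
  ae_all_iff.2 fun j => ae_of_ae_map (hy j).aemeasurable (hlaw j ▸ ae_pos_gammaMeasure)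

variable [IsProbabilityMeasure μ]

theorem one_sub_sum_le_measure_of_ae {B : ι → Set Ω} {T : Set Ω}
    (h : ∀ᵐ ω ∂μ, (∀ i, ω ∉ B i) → ω ∈ T) : 1 - ∑ i, μ (B i) ≤ μ T := by
  have hTc : μ Tᶜ ≤ ∑ i, μ (B i) :=
    (measure_mono_ae (h.mono fun ω hω hωT => show ω ∈ ⋃ i, B i by simpa using mt hω hωT)).trans
      (measure_iUnion_fintype_le μ B)
  calc 1 - ∑ i, μ (B i) ≤ 1 - μ Tᶜ := tsub_le_tsub_left hTc 1
    _ ≤ μ T := by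
      rw [tsub_le_iff_right, ← measure_univ (μ := μ)]
      exact measure_univ_le_add_compl T

theorem measure_sum_mul_nonneg_le_prod_of_gamma (hα : 0 < α) (hy : ∀ j, Measurable (y j))
    (hindep : iIndepFun y μ) (hlaw : ∀ j, μ.map (y j) = gammaMeasure α 1) {w : ι → ℝ}
    (hw : ∀ j, w j < 1) :
    μ {ω | 0 ≤ ∑ j, w j * y j ω} ≤ ENNReal.ofReal (∏ j, (1 / (1 - w j)) ^ α) := by
  set X : ι → Ω → ℝ := fun j ω => w j * y j ω
  have hX : ∀ j, Measurable (X j) := fun j => (hy j).const_mul _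
  have hXindep : iIndepFun X μ :=
    hindep.comp (fun j x => w j * x) fun j => measurable_const_mul _
  have hint : ∀ j ∈ Finset.univ, Integrable (fun ω => exp (1 * X j ω)) μ := fun j _ => by
    have h := integrable_exp_mul_gammaMeasure hα one_pos (hw j)
    rw [← hlaw j, integrable_map_measure (by fun_prop) (hy j).aemeasurable] at h
    simp only [X, one_mul]; exact h
  have hmgf : ∀ j, mgf (X j) μ 1 = (1 / (1 - w j)) ^ α := fun j => by
    rw [mgf_const_mul, mul_one, ← mgf_id_map (hy j).aemeasurable, hlaw j,
      mgf_id_gammaMeasure hα one_pos (hw j)]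
  have hchernoff :=
    measure_ge_le_exp_mul_mgf 0 zero_le_one (hXindep.integrable_exp_mul_sum hX hint)
  rw [hXindep.mgf_sum hX, Finset.prod_congr rfl fun j _ => hmgf j, mul_zero, exp_zero,
    one_mul] at hchernoff
  rw [ENNReal.le_ofReal_iff_toReal_le (measure_ne_top _ _)
    (Finset.prod_nonneg fun j _ => rpow_nonneg (one_div_pos.2 (sub_pos.2 (hw j))).le _)]
  simpa [X, Finset.sum_apply, measureReal_def] using hchernoff

theorem measure_mul_lt_mul_sum_le_of_lt (hα : 0 < α) (hy : ∀ j, Measurable (y j))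
    (hindep : iIndepFun y μ) (hlaw : ∀ j, μ.map (y j) = gammaMeasure α 1) (i : ι) {t S : ℝ}
    (ht : 0 ≤ t) (htα : t < α) (hS : Fintype.card ι * α < S) :
    μ {ω | y i ω * S < (α - t) * ∑ j, y j ω} ≤ ENNReal.ofReal (exp (-(t ^ 2 / (2 * α)))) := by
  classical
  have hm : (({i}ᶜ : Finset ι).card : ℝ) + 1 = Fintype.card ι := by
    rw [Finset.card_compl, Finset.card_singleton, Nat.cast_sub (Fintype.card_pos_iff.2 ⟨i⟩)]
    ring
  have ha : 0 < α - t := sub_pos.2 htα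
  have hSα : ({i}ᶜ : Finset ι).card * α ≤ S - α := by nlinarith
  have hSα' : 0 < S - α := by nlinarith
  -- Chernoff for `lam * ((α - t) ∑ⱼ yⱼ - S yᵢ)`, with `lam` chosen so that `1 - w i = α / (α - t)`.
  set lam := t / ((α - t) * (t + (S - α)))
  set w : ι → ℝ := fun j => lam * ((α - t) - if j = i then S else 0)
  have hwi : w i = -(t / (α - t)) := by
    simp only [w, if_pos, lam]
    field_simp [ha.ne', hSα'.ne']
    ring
  have hwj : ∀ j ≠ i, w j = t / (t + (S - α)) := fun j hj => by
    simp only [w, if_neg hj, sub_zero, lam]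
    field_simp [ha.ne', hSα'.ne']
  have hw : ∀ j, w j < 1 := fun j => by
    rcases eq_or_ne j i with rfl | hj
    · rw [hwi]
      linarith [div_nonneg ht ha.le]
    · rw [hwj j hj, div_lt_one (by positivity)]
      linarith
  have hfactor_i : 1 / (1 - w i) = 1 - t / α := by
    rw [hwi]
    field_simp [ha.ne', hα.ne']
    ring
  have hfactor_j : ∀ j ≠ i, 1 / (1 - w j) = 1 + t / (S - α) := fun j hj => by
    rw [hwj j hj]
    field_simp [hSα'.ne']
    ring
  calc μ {ω | y i ω * S < (α - t) * ∑ j, y j ω} ≤ μ {ω | 0 ≤ ∑ j, w j * y j ω} :=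
        measure_mono fun ω (hω : y i ω * S < (α - t) * ∑ j, y j ω) => by
          have hsum : ∑ j, w j * y j ω = lam * ((α - t) * ∑ j, y j ω - S * y i ω) := by
            simp [w, Finset.mul_sum, sub_mul, mul_sub, Finset.sum_sub_distrib, ite_mul,
              mul_assoc]
          show 0 ≤ ∑ j, w j * y j ω
          rw [hsum]
          exact mul_nonneg (by positivity) (by linarith)
    _ ≤ ENNReal.ofReal (∏ j, (1 / (1 - w j)) ^ α) :=
        measure_sum_mul_nonneg_le_prod_of_gamma hα hy hindep hlaw hw
    _ ≤ ENNReal.ofReal (exp (-(t ^ 2 / (2 * α)))) := by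
        refine ENNReal.ofReal_le_ofReal ?_
        rw [Fintype.prod_eq_mul_prod_compl i, hfactor_i,
          Finset.prod_eq_pow_card fun j hj => by rw [hfactor_j j (by simpa using hj)]]
        exact one_sub_div_rpow_mul_one_add_div_rpow_pow_le _ hα ht htα hSα

theorem measure_mul_lt_mul_sum_le (hα : 0 < α) (hy : ∀ j, Measurable (y j))
    (hindep : iIndepFun y μ) (hlaw : ∀ j, μ.map (y j) = gammaMeasure α 1) (i : ι) {t S : ℝ}
    (ht : 0 ≤ t) (hS : Fintype.card ι * α < S) :
    μ {ω | y i ω * S < (α - t) * ∑ j, y j ω} ≤ ENNReal.ofReal (exp (-(t ^ 2 / (2 * α)))) := by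
  rcases lt_or_ge t α with htα | htα
  · exact measure_mul_lt_mul_sum_le_of_lt hα hy hindep hlaw i ht htα hS
  have hS₀ : 0 < S := lt_of_le_of_lt (by positivity) hS
  refine (measure_eq_zero_iff_ae_notMem.2 ?_).trans_le zero_le
  filter_upwards [ae_forall_pos_of_map_eq_gammaMeasure hy hlaw] with ω hω
    (hlt : y i ω * S < (α - t) * ∑ j, y j ω)
  have : (α - t) * ∑ j, y j ω ≤ 0 := mul_nonpos_of_nonpos_of_nonneg (sub_nonpos.2 htα)
    (Finset.sum_nonneg fun j _ => (hω j).le)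
  linarith [mul_pos (hω i) hS₀]

theorem one_sub_card_mul_le_measure_forall_le_div_sum (hα : 0 < α) (hy : ∀ j, Measurable (y j))
    (hindep : iIndepFun y μ) (hlaw : ∀ j, μ.map (y j) = gammaMeasure α 1) {t S : ℝ}
    (ht : 0 ≤ t) (hS : Fintype.card ι * α < S) :
    1 - Fintype.card ι * ENNReal.ofReal (exp (-(t ^ 2 / (2 * α)))) ≤
      μ {ω | ∀ i, (α - t) / S ≤ y i ω / ∑ j, y j ω} := by
  calc 1 - Fintype.card ι * ENNReal.ofReal (exp (-(t ^ 2 / (2 * α))))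
      = 1 - ∑ _ : ι, ENNReal.ofReal (exp (-(t ^ 2 / (2 * α)))) := by
        rw [Finset.sum_const, Finset.card_univ, nsmul_eq_mul]
    _ ≤ 1 - ∑ i, μ {ω | y i ω * S < (α - t) * ∑ j, y j ω} := tsub_le_tsub_left
        (Finset.sum_le_sum fun i _ => measure_mul_lt_mul_sum_le hα hy hindep hlaw i ht hS) 1
    _ ≤ _ := one_sub_sum_le_measure_of_ae <| by
        filter_upwards [ae_forall_pos_of_map_eq_gammaMeasure hy hlaw] with ω hω hgood i
        have hi : ¬ y i ω * S < (α - t) * ∑ j, y j ω := hgood i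
        rw [div_le_div_iff₀ (lt_of_le_of_lt (by positivity) hS)
          (Finset.sum_pos (fun j _ => hω j) ⟨i, Finset.mem_univ i⟩)]
        linarith

end

theorem stmt13_general {Ω : Type*} [MeasurableSpace Ω] (μ : Measure Ω) [IsProbabilityMeasure μ]
    (n : ℕ) (hn : 0 < n) (α : ℝ) (hα : 0 < α)
    (y : Fin n → Ω → ℝ) (hy : ∀ i, Measurable (y i))
    (hindep : iIndepFun y μ)
    (hlaw : ∀ i, Measure.map (y i) μ = gammaMeasure α 1)
    (δ₁ δ₂ : ℝ) (hδ₁ : δ₁ ∈ Set.Ioo (0 : ℝ) 1) (hδ₂ : δ₂ ∈ Set.Ioo (0 : ℝ) 1) :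
    ENNReal.ofReal (1 - δ₁ - δ₂) ≤
      μ {ω | ∀ i,
        (1 / (n : ℝ)) * ((α - Real.sqrt (2 * α * Real.log (n / δ₁))) /
          (α + Real.sqrt (2 * α * Real.log (1 / δ₂) / n))) ≤
        y i ω / (∑ j, y j ω)} := by
  obtain ⟨hδ₁₀, hδ₁₁⟩ := hδ₁
  obtain ⟨hδ₂₀, hδ₂₁⟩ := hδ₂
  have hn₀ : (0 : ℝ) < n := Nat.cast_pos.2 hn
  set t := sqrt (2 * α * log (n / δ₁))
  set D := α + sqrt (2 * α * log (1 / δ₂) / n)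
  have hD : α < D := lt_add_of_pos_right _ (sqrt_pos.2 (by
    have := log_pos ((one_lt_div hδ₂₀).2 hδ₂₁); positivity))
  have hS : (Fintype.card (Fin n) : ℝ) * α < n * D := by
    simpa using mul_lt_mul_of_pos_left hD hn₀
  have hexp : exp (-(t ^ 2 / (2 * α))) = δ₁ / n := by
    have := log_pos ((one_lt_div hδ₁₀).2 (hδ₁₁.trans_le (Nat.one_le_cast.2 hn)))
    rw [sq_sqrt (by positivity), show 2 * α * log (n / δ₁) / (2 * α) = log (n / δ₁) by
      field_simp, exp_neg, exp_log (by positivity), inv_div]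
  rw [show 1 / (n : ℝ) * ((α - t) / D) = (α - t) / (n * D) by rw [div_mul_div_comm, one_mul]]
  calc ENNReal.ofReal (1 - δ₁ - δ₂) ≤ 1 - n * ENNReal.ofReal (δ₁ / n) := by
        rw [← ENNReal.ofReal_natCast, ← ENNReal.ofReal_mul hn₀.le, mul_div_cancel₀ _ hn₀.ne',
          ← ENNReal.ofReal_one, ← ENNReal.ofReal_sub _ hδ₁₀.le]
        exact ENNReal.ofReal_le_ofReal (by linarith)
    _ ≤ _ := by
        simpa only [Fintype.card_fin, hexp] using
          one_sub_card_mul_le_measure_forall_le_div_sum hα hy hindep hlaw (t := t) (sqrt_nonneg _) hS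

/-- Let `y_1, …, y_n` be i.i.d. `Gamma(α, 1)` with `α > 0` and
`x_i = y_i / Σ_j y_j`. For `δ₁, δ₂ ∈ (0,1)` with `δ₂ > e^{−2α}`, with probability at
least `1 − δ₁ − δ₂`,
`min_i x_i ≥ (1/n)·(α − √(2α log(n/δ₁))) / (α + √(2α log(1/δ₂)/n))`. -/
theorem stmt13 {Ω : Type*} [MeasurableSpace Ω] (μ : Measure Ω) [IsProbabilityMeasure μ]
    (n : ℕ) (hn : 0 < n) (α : ℝ) (hα : 0 < α)
    (y : Fin n → Ω → ℝ) (hy : ∀ i, Measurable (y i))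
    (hindep : iIndepFun y μ)
    (hlaw : ∀ i, Measure.map (y i) μ = gammaMeasure α 1)
    (δ₁ δ₂ : ℝ) (hδ₁ : δ₁ ∈ Set.Ioo (0 : ℝ) 1) (hδ₂ : δ₂ ∈ Set.Ioo (0 : ℝ) 1)
    (hδ₂' : Real.exp (-(2 * α)) < δ₂) :
    ENNReal.ofReal (1 - δ₁ - δ₂) ≤
      μ {ω | ∀ i,
        (1 / (n : ℝ)) * ((α - Real.sqrt (2 * α * Real.log (n / δ₁))) /
          (α + Real.sqrt (2 * α * Real.log (1 / δ₂) / n))) ≤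
        y i ω / (∑ j, y j ω)} :=
  stmt13_general μ n hn α hα y hy hindep hlaw δ₁ δ₂ hδ₁ hδ₂
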